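/- Let T be a binary phylogenetic X-tree with |X| ≥ 4, and let C be a set of k characters on X with k ∈ {1, 2, 3} that is convex on T and distinguishes T. Suppose no character in C contains a singleton part, every internal edge of T is distinguished by exactly one character in C, and every character in C distinguishes at least one internal edge of T. Then there is an internal k-colouring γ of T such that C = Π(γ). -/

import Mathlib

open SimpleGraph

/-- A phylogenetic `X`-tree: a finite tree with no degree-two vertices whose
leaves (degree-one vertices) are labelled bijectively by `X`. -/
structure PhyloTree (X : Type) : Type 1 where
  V : Type
  vfin : Finite V
  G : SimpleGraph V
  isTree : G.IsTree
  φ : X → V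
  φinj : Function.Injective φ
  leaf_iff : ∀ v : V, (G.neighborSet v).ncard = 1 ↔ v ∈ Set.range φ
  not_two : ∀ v : V, (G.neighborSet v).ncard ≠ 2

namespace PhyloTree

variable {X : Type}

/-- Internal (non-leaf) vertex. -/
def IsInternal (T : PhyloTree X) (v : T.V) : Prop := v ∉ Set.range T.φ

/-- A binary phylogenetic tree: every internal vertex has degree three. -/
def IsBinary (T : PhyloTree X) : Prop :=
  ∀ v : T.V, T.IsInternal v → (T.G.neighborSet v).ncard = 3

/-- `w` lies on the path between `u` and `v`. -/
def OnPath (T : PhyloTree X) (u v w : T.V) : Prop :=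
  ∃ p : T.G.Walk u v, p.IsPath ∧ w ∈ p.support

/-- Vertex set of the minimal subtree spanned by the leaves labelled by `A`. -/
def span (T : PhyloTree X) (A : Set X) : Set T.V :=
  {v | ∃ a ∈ A, ∃ b ∈ A, T.OnPath (T.φ a) (T.φ b) v}

/-- A character (partition of `X`) is convex on `T` if the spanned subtrees of
distinct parts are vertex disjoint. -/
def ConvexOn (T : PhyloTree X) (χ : Set (Set X)) : Prop :=
  ∀ A ∈ χ, ∀ B ∈ χ, A ≠ B → Disjoint (T.span A) (T.span B)

/-- Isomorphism of phylogenetic `X`-trees fixing the leaf labels. -/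
def LabelIso (T T' : PhyloTree X) : Prop :=
  ∃ e : T.G ≃g T'.G, ∀ x : X, e (T.φ x) = T'.φ x

/-- A set `C` of characters defines `T`: each member is a character convex on `T`,
and any phylogenetic `X`-tree on which `C` is convex is isomorphic to `T`. -/
def Defines (C : Set (Set (Set X))) (T : PhyloTree X) : Prop :=
  (∀ χ ∈ C, Setoid.IsPartition χ) ∧ (∀ χ ∈ C, T.ConvexOn χ) ∧
    ∀ T' : PhyloTree X, (∀ χ ∈ C, T'.ConvexOn χ) → T.LabelIso T'

/-- `T` is defined by some set of at most `n` characters. -/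
def DefinedByAtMost (n : ℕ) (T : PhyloTree X) : Prop :=
  ∃ C : Set (Set (Set X)), C.Finite ∧ C.ncard ≤ n ∧ Defines C T

/-- A cherry: two distinct leaves adjacent to a common vertex. -/
def IsCherry (T : PhyloTree X) (x y : X) : Prop :=
  x ≠ y ∧ ∃ v : T.V, T.G.Adj (T.φ x) v ∧ T.G.Adj (T.φ y) v

/-- An internal edge: an edge both of whose endpoints are internal vertices. -/
def IsInternalEdge (T : PhyloTree X) (u v : T.V) : Prop :=
  T.G.Adj u v ∧ T.IsInternal u ∧ T.IsInternal v

/-- The character `χ` distinguishes the internal edge `{u, v}`. -/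
def DistEdge (T : PhyloTree X) (χ : Set (Set X)) (u v : T.V) : Prop :=
  ∃ A ∈ χ, ∃ B ∈ χ, A ≠ B ∧
    (∃ a ∈ A, ∃ a' ∈ A, a ≠ a' ∧
      T.OnPath (T.φ a) (T.φ a') u ∧ ¬ T.OnPath (T.φ a) (T.φ a') v) ∧
    (∃ b ∈ B, ∃ b' ∈ B, b ≠ b' ∧
      T.OnPath (T.φ b) (T.φ b') v ∧ ¬ T.OnPath (T.φ b) (T.φ b') u)

/-- `C` distinguishes `T`: every internal edge is distinguished by some member of `C`. -/
def Distinguishes (T : PhyloTree X) (C : Set (Set (Set X))) : Prop :=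
  ∀ u v : T.V, T.IsInternalEdge u v → ∃ χ ∈ C, T.DistEdge χ u v

/-- Every internal vertex is adjacent to a leaf. -/
def IsCaterpillar (T : PhyloTree X) : Prop :=
  ∀ v : T.V, T.IsInternal v → ∃ u : T.V, T.G.Adj v u ∧ u ∈ Set.range T.φ

/-- An internal `k`-colouring: a surjective assignment of colours in `Fin k` to the
internal edges of `T` such that adjacent internal edges get different colours. -/
structure InternalColoring (T : PhyloTree X) (k : ℕ) where
  γ : Sym2 T.V → Fin k
  proper : ∀ u v w : T.V, T.IsInternalEdge u v → T.IsInternalEdge v w → u ≠ w →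
    γ s(u, v) ≠ γ s(v, w)
  surj : ∀ i : Fin k, ∃ u v : T.V, T.IsInternalEdge u v ∧ γ s(u, v) = i

/-- The graph obtained from `T` by deleting all internal edges of colour `i`. -/
def delGraph (T : PhyloTree X) {k : ℕ} (c : T.InternalColoring k) (i : Fin k) :
    SimpleGraph T.V :=
  T.G.deleteEdges {e | c.γ e = i ∧ ∃ u v : T.V, e = s(u, v) ∧ T.IsInternalEdge u v}

/-- The character `π(γ, i)` induced by colour `i`: the partition of `X` given by the
connected components after deleting the internal edges of colour `i`. -/
def colorChar (T : PhyloTree X) {k : ℕ} (c : T.InternalColoring k) (i : Fin k) :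
    Set (Set X) :=
  {P | ∃ x : X, P = {y : X | (T.delGraph c i).Reachable (T.φ x) (T.φ y)}}

/-- The set `Π(γ)` of characters induced by an internal colouring. -/
def charSet (T : PhyloTree X) {k : ℕ} (c : T.InternalColoring k) : Set (Set (Set X)) :=
  Set.range (T.colorChar c)

/-- `T` is defined by the internal colouring `c`. -/
def DefinedByColoring (T : PhyloTree X) {k : ℕ} (c : T.InternalColoring k) : Prop :=
  Defines (T.charSet c) T

end PhyloTree

namespace SimpleGraph.Walk

variable {V : Type*} {G : SimpleGraph V} {a b : V}

theorem getVert_mem_support' (p : G.Walk a b) {i : ℕ} (hi : i ≤ p.length) :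
    p.getVert i ∈ p.support :=
  mem_support_iff_exists_getVert.mpr ⟨i, rfl, hi⟩

theorem IsPath.getVert_ne {p : G.Walk a b} (hp : p.IsPath) :
    ∀ {i j : ℕ}, i < j → j ≤ p.length → p.getVert i ≠ p.getVert j := by
  induction p with
  | nil => intro i j hij hj; simp at hj; omega
  | cons h q ih =>
    intro i j hij hj heq
    rcases (Walk.cons_isPath_iff h q).mp hp with ⟨hq, hnot⟩
    match i, j with
    | 0, (j+1) =>
      simp only [Walk.getVert_zero, Walk.getVert_cons_succ] at heq
      exact hnot (heq ▸ q.getVert_mem_support' (by simpa using hj))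
    | (i+1), (j+1) =>
      simp only [Walk.getVert_cons_succ] at heq
      exact ih hq (by omega) (by simpa using hj) heq

theorem length_pos_of_ne (p : G.Walk a b) (hab : a ≠ b) : 0 < p.length := by
  rcases Nat.eq_zero_or_pos p.length with h0 | h
  · exact absurd (by rw [← p.getVert_zero, ← h0, p.getVert_length]) hab
  · exact h

end SimpleGraph.Walk

namespace PhyloTree

variable {X : Type} {T : PhyloTree X}

lemma distEdge_symm {χ : Set (Set X)} {u v : T.V} (h : T.DistEdge χ u v) :
    T.DistEdge χ v u := by
  obtain ⟨A, hA, B, hB, hne, hA', hB'⟩ := h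
  exact ⟨B, hB, A, hA, hne.symm, hB', hA'⟩

lemma isInternalEdge_symm {u v : T.V} (h : T.IsInternalEdge u v) :
    T.IsInternalEdge v u := ⟨h.1.symm, h.2.2, h.2.1⟩

lemma onPath_mem_span {A : Set X} {a b : X} {z : T.V} (ha : a ∈ A) (hb : b ∈ A)
    (h : T.OnPath (T.φ a) (T.φ b) z) : z ∈ T.span A := ⟨a, ha, b, hb, h⟩

lemma span_eq {χ : Set (Set X)} (hconv : T.ConvexOn χ) {A B : Set X}
    (hA : A ∈ χ) (hB : B ∈ χ) {z : T.V} (h1 : z ∈ T.span A) (h2 : z ∈ T.span B) :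
    A = B := by
  by_contra hne
  exact Set.disjoint_left.mp (hconv A hA B hB hne) h1 h2

lemma phi_mem_span {A : Set X} {a : X} (ha : a ∈ A) : T.φ a ∈ T.span A :=
  ⟨a, ha, a, ha, Walk.nil, by simp, by simp⟩

lemma internal_of_two_nbrs {v s t : T.V} (hst : s ≠ t)
    (hs : T.G.Adj v s) (ht : T.G.Adj v t) : T.IsInternal v := by
  haveI := T.vfin
  intro hv
  have h1 := (T.leaf_iff v).mpr hv
  have h2 : 1 < (T.G.neighborSet v).ncard :=
    (Set.one_lt_ncard_iff (Set.toFinite _)).mpr ⟨s, t, hs, ht, hst⟩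
  omega

lemma leaf_unique_nbr (x : X) : ∃ w, T.G.neighborSet (T.φ x) = {w} :=
  Set.ncard_eq_one.mp ((T.leaf_iff _).mpr ⟨x, rfl⟩)

lemma exists_path (x y : T.V) : ∃ p : T.G.Walk x y, p.IsPath := by
  classical
  obtain ⟨w⟩ := T.isTree.isConnected.preconnected x y
  exact ⟨w.toPath.1, w.toPath.2⟩

lemma internal_index {a b : X} {p : T.G.Walk (T.φ a) (T.φ b)} {v : T.V}
    (hv : T.IsInternal v) (hmem : v ∈ p.support) :
    ∃ i, 0 < i ∧ i < p.length ∧ p.getVert i = v := by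
  obtain ⟨i, hiv, hil⟩ := Walk.mem_support_iff_exists_getVert.mp hmem
  refine ⟨i, ?_, ?_, hiv⟩
  · rcases Nat.eq_zero_or_pos i with h0 | h
    · exact absurd ⟨a, by rw [← hiv, h0, p.getVert_zero]⟩ hv
    · exact h
  · rcases lt_or_eq_of_le hil with h | h
    · exact h
    · exact absurd ⟨b, by rw [← hiv, h, p.getVert_length]⟩ hv

/-- A path between leaf images passing through internal `v` but missing its
neighbour `u` must contain every other neighbour `w` of `v`. -/
lemma mem_support_of_nbr (hbin : T.IsBinary) {a b : X}
    {p : T.G.Walk (T.φ a) (T.φ b)} (hp : p.IsPath) {v u w : T.V}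
    (hv : T.IsInternal v) (hvmem : v ∈ p.support) (humem : u ∉ p.support)
    (hu : T.G.Adj v u) (hw : T.G.Adj v w) (hwu : w ≠ u) : w ∈ p.support := by
  haveI := T.vfin
  obtain ⟨i, h0, hl, rfl⟩ := internal_index hv hvmem
  set s := p.getVert (i-1) with hs_def
  set t := p.getVert (i+1) with ht_def
  have hi1 : i - 1 + 1 = i := by omega
  have hadj_s : T.G.Adj (p.getVert i) s := by
    have := p.adj_getVert_succ (show i - 1 < p.length by omega)
    rw [hi1] at this
    exact this.symm
  have hadj_t : T.G.Adj (p.getVert i) t := p.adj_getVert_succ hl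
  have hst : s ≠ t := fun h =>
    hp.getVert_ne (show i - 1 < i + 1 by omega) (by omega) h
  have hsmem : s ∈ p.support := p.getVert_mem_support' (by omega)
  have htmem : t ∈ p.support := p.getVert_mem_support' (by omega)
  have hsu : s ≠ u := fun h => humem (h ▸ hsmem)
  have htu : t ≠ u := fun h => humem (h ▸ htmem)
  have hcard : (T.G.neighborSet (p.getVert i)).ncard = 3 := hbin _ hv
  have humem' : u ∈ T.G.neighborSet (p.getVert i) := hu
  have hdiff : (T.G.neighborSet (p.getVert i) \ {u}).ncard = 2 := by
    rw [Set.ncard_diff_singleton_of_mem humem', hcard]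
  have hsub : ({s, t} : Set T.V) ⊆ T.G.neighborSet (p.getVert i) \ {u} := by
    rintro z (rfl | rfl)
    · exact ⟨hadj_s, hsu⟩
    · exact ⟨hadj_t, htu⟩
  have heq : ({s, t} : Set T.V) = T.G.neighborSet (p.getVert i) \ {u} :=
    Set.eq_of_subset_of_ncard_le hsub (by rw [hdiff, Set.ncard_pair hst])
      (Set.toFinite _)
  have hwmem : w ∈ ({s, t} : Set T.V) := by
    rw [heq]; exact ⟨hw, hwu⟩
  rcases hwmem with rfl | rfl
  · exact hsmem
  · exact htmem

/-- Two adjacent internal edges cannot be distinguished by the same convex character. -/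
lemma no_adjacent_same (hbin : T.IsBinary) {χ : Set (Set X)} (hconv : T.ConvexOn χ)
    {u v w : T.V} (huv : T.IsInternalEdge u v) (hvw : T.IsInternalEdge v w)
    (hne : u ≠ w) (d1 : T.DistEdge χ u v) (d2 : T.DistEdge χ v w) : False := by
  obtain ⟨A1, hA1, B1, hB1, hne1, -, ⟨b, hb, b', hb', hbb', hOn1, hNot1⟩⟩ := d1
  obtain ⟨A2, hA2, B2, hB2, hne2, ⟨a2, ha2, a2', ha2', haa2, hOn2, hNot2⟩,
    ⟨c2, hc2, c2', hc2', hcc2, hOn3, hNot3⟩⟩ := d2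
  obtain ⟨p, hp, hvp⟩ := hOn1
  have hup : u ∉ p.support := fun h => hNot1 ⟨p, hp, h⟩
  have hwsup : w ∈ p.support :=
    mem_support_of_nbr hbin hp hvw.2.1 hvp hup huv.1.symm hvw.1 hne.symm
  have hwB1 : w ∈ T.span B1 := ⟨b, hb, b', hb', p, hp, hwsup⟩
  have hvB1 : v ∈ T.span B1 := ⟨b, hb, b', hb', p, hp, hvp⟩
  have hvA2 : v ∈ T.span A2 := onPath_mem_span ha2 ha2' hOn2
  have hwB2 : w ∈ T.span B2 := onPath_mem_span hc2 hc2' hOn3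
  have e1 : A2 = B1 := span_eq hconv hA2 hB1 hvA2 hvB1
  have e2 : B2 = B1 := span_eq hconv hB2 hB1 hwB2 hwB1
  exact hne2 (e1.trans e2.symm)

end PhyloTree

namespace PhyloTree

variable {X : Type} {T : PhyloTree X}

lemma part_big (hfinX : Finite X) {χ : Set (Set X)}
    (hnos : ∀ A ∈ χ, A.ncard ≠ 1) {A : Set X} (hA : A ∈ χ) {x : X} (hxA : x ∈ A) :
    ∃ x' ∈ A, x' ≠ x := by
  have hfinA : A.Finite := Set.toFinite A
  have h0 : A.ncard ≠ 0 := fun h => by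
    rw [Set.ncard_eq_zero hfinA] at h
    simp [h] at hxA
  have h1 : 1 < A.ncard := by have := hnos A hA; omega
  obtain ⟨x', hx', hxx'⟩ := Set.exists_ne_of_one_lt_ncard h1 x
  exact ⟨x', hx', hxx'⟩

lemma getVert_one_eq {x : X} {c : T.V} {H : SimpleGraph T.V} (hH : H ≤ T.G)
    {p : H.Walk (T.φ x) c} (hlen : 0 < p.length) {w : T.V}
    (hw : T.G.neighborSet (T.φ x) = {w}) : p.getVert 1 = w := by
  have h := p.adj_getVert_succ (i := 0) hlen
  rw [p.getVert_zero] at h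
  have : p.getVert 1 ∈ T.G.neighborSet (T.φ x) := hH h
  rwa [hw, Set.mem_singleton_iff] at this

/-- The second vertex of any nontrivial walk from a leaf lies in the span of the
leaf's part (provided the part has another element). -/
lemma nbr_mem_span (hfinX : Finite X) {χ : Set (Set X)}
    (hnos : ∀ A ∈ χ, A.ncard ≠ 1) {A : Set X} (hA : A ∈ χ) {x : X} (hxA : x ∈ A)
    {w : T.V} (hw : T.G.neighborSet (T.φ x) = {w}) : w ∈ T.span A := by
  obtain ⟨x', hx'A, hx'x⟩ := part_big hfinX hnos hA hxA
  obtain ⟨q, hq⟩ := exists_path (T.φ x) (T.φ x')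
  have hlq : 0 < q.length := q.length_pos_of_ne (fun h => hx'x (T.φinj h).symm)
  have h1 : q.getVert 1 = w := getVert_one_eq le_rfl hlq hw
  have : w ∈ q.support := h1 ▸ q.getVert_mem_support' (by omega)
  exact ⟨x, hxA, x', hx'A, q, hq, this⟩

/-- Every internal vertex lies in the span of some part of each character in `C`. -/
lemma covered (hbin : T.IsBinary) (hfinX : Finite X) {C : Set (Set (Set X))}
    (hfin : C.Finite) (hcard3 : C.ncard ≤ 3)
    (hchar : ∀ χ ∈ C, Setoid.IsPartition χ)
    (hconv : ∀ χ ∈ C, T.ConvexOn χ)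
    (hdist : T.Distinguishes C)
    (hnosing : ∀ χ ∈ C, ∀ A ∈ χ, A.ncard ≠ 1)
    {χ : Set (Set X)} (hχ : χ ∈ C) {v : T.V} (hv : T.IsInternal v) :
    ∃ A ∈ χ, v ∈ T.span A := by
  by_contra hnone
  push_neg at hnone
  by_cases hleaf : ∃ x : X, T.G.Adj v (T.φ x)
  · obtain ⟨x, hx⟩ := hleaf
    obtain ⟨A, ⟨hA, hxA⟩, -⟩ := (hchar χ hχ).2 x
    obtain ⟨w, hw⟩ := leaf_unique_nbr (T := T) x
    have hvw : v = w := by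
      have : v ∈ T.G.neighborSet (T.φ x) := hx.symm
      rwa [hw, Set.mem_singleton_iff] at this
    exact hnone A hA (hvw ▸ nbr_mem_span hfinX (hnosing χ hχ) hA hxA hw)
  · push_neg at hleaf
    have hcard : (T.G.neighborSet v).ncard = 3 := hbin v hv
    obtain ⟨n1, n2, n3, h12, h13, h23, hset⟩ := Set.ncard_eq_three.mp hcard
    have hadj : ∀ n ∈ ({n1, n2, n3} : Set T.V), T.G.Adj v n := by
      intro n hn; rw [← hset] at hn; exact hn
    have hint : ∀ n ∈ ({n1, n2, n3} : Set T.V), T.IsInternal n := by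
      rintro n hn ⟨z, rfl⟩
      exact hleaf z (hadj _ hn)
    have hie : ∀ n ∈ ({n1, n2, n3} : Set T.V), T.IsInternalEdge v n :=
      fun n hn => ⟨hadj n hn, hv, hint n hn⟩
    have hget : ∀ n ∈ ({n1, n2, n3} : Set T.V),
        ∃ ψ ∈ C, T.DistEdge ψ v n := fun n hn => hdist v n (hie n hn)
    obtain ⟨ψ1, hψ1, hd1⟩ := hget n1 (by simp)
    obtain ⟨ψ2, hψ2, hd2⟩ := hget n2 (by simp)
    obtain ⟨ψ3, hψ3, hd3⟩ := hget n3 (by simp)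
    have hneχ : ∀ ψ (n : T.V), T.DistEdge ψ v n → ψ ≠ χ := by
      rintro ψ n hd rfl
      obtain ⟨A, hA, B, hB, hne, ⟨a, ha, a', ha', haa', hOn, -⟩, -⟩ := hd
      exact hnone A hA (onPath_mem_span ha ha' hOn)
    have hpair : ∀ (ψ : Set (Set X)) (m n : T.V), ψ ∈ C → m ≠ n →
        m ∈ ({n1, n2, n3} : Set T.V) → n ∈ ({n1, n2, n3} : Set T.V) →
        T.DistEdge ψ v m → T.DistEdge ψ v n → False := by
      intro ψ m n hψ hmn hm hn hdm hdn
      exact no_adjacent_same hbin (hconv ψ hψ)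
        (isInternalEdge_symm (hie m hm)) (hie n hn) hmn
        (distEdge_symm hdm) hdn
    have h12' : ψ1 ≠ ψ2 := fun h =>
      hpair ψ1 n1 n2 hψ1 h12 (by simp) (by simp) hd1 (h ▸ hd2)
    have h13' : ψ1 ≠ ψ3 := fun h =>
      hpair ψ1 n1 n3 hψ1 h13 (by simp) (by simp) hd1 (h ▸ hd3)
    have h23' : ψ2 ≠ ψ3 := fun h =>
      hpair ψ2 n2 n3 hψ2 h23 (by simp) (by simp) hd2 (h ▸ hd3)
    have hsub : ({χ, ψ1, ψ2, ψ3} : Set (Set (Set X))) ⊆ C := by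
      rintro ψ (rfl | rfl | rfl | rfl) <;> assumption
    have hc4 : ({χ, ψ1, ψ2, ψ3} : Set (Set (Set X))).ncard = 4 := by
      rw [Set.ncard_insert_of_notMem (by
        simp only [Set.mem_insert_iff, Set.mem_singleton_iff]
        push_neg
        exact ⟨fun h => hneχ ψ1 n1 hd1 h.symm, fun h => hneχ ψ2 n2 hd2 h.symm,
          fun h => hneχ ψ3 n3 hd3 h.symm⟩) (Set.toFinite _),
        Set.ncard_insert_of_notMem (by simp [h12', h13']) (Set.toFinite _),
        Set.ncard_pair h23']
    have := Set.ncard_le_ncard hsub hfin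
    omega

end PhyloTree

namespace PhyloTree

variable {X : Type} {T : PhyloTree X}

/-- On any path (in a spanning subgraph) between leaves labelled by elements of
distinct parts of `χ`, there is an internal edge distinguished by `χ`. -/
lemma key_edge (hbin : T.IsBinary) (hfinX : Finite X) {χ : Set (Set X)}
    (hpartχ : Setoid.IsPartition χ) (hconvχ : T.ConvexOn χ)
    (hnos : ∀ A ∈ χ, A.ncard ≠ 1)
    (hcov : ∀ v : T.V, T.IsInternal v → ∃ A ∈ χ, v ∈ T.span A)
    {x y : X} {A B : Set X} (hA : A ∈ χ) (hB : B ∈ χ) (hxA : x ∈ A) (hyB : y ∈ B)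
    (hAB : A ≠ B) {H : SimpleGraph T.V} (hH : H ≤ T.G)
    (p : H.Walk (T.φ x) (T.φ y)) (hp : p.IsPath) :
    ∃ j, j < p.length ∧ T.IsInternalEdge (p.getVert j) (p.getVert (j+1)) ∧
      T.DistEdge χ (p.getVert j) (p.getVert (j+1)) := by
  classical
  have hxy : x ≠ y := by
    rintro rfl
    obtain ⟨P, -, huniq⟩ := hpartχ.2 x
    exact hAB ((huniq A ⟨hA, hxA⟩).trans (huniq B ⟨hB, hyB⟩).symm)
  have hlen : 0 < p.length := p.length_pos_of_ne (fun h => hxy (T.φinj h))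
  obtain ⟨w0, hw0⟩ := leaf_unique_nbr (T := T) x
  have hw0A : w0 ∈ T.span A := nbr_mem_span hfinX hnos hA hxA hw0
  have h1A : p.getVert 1 ∈ T.span A := by
    rw [getVert_one_eq hH hlen hw0]; exact hw0A
  obtain ⟨w1, hw1⟩ := leaf_unique_nbr (T := T) y
  have hw1B : w1 ∈ T.span B := nbr_mem_span hfinX hnos hB hyB hw1
  have hlast : p.getVert (p.length - 1) = w1 := by
    have hrevlen : 0 < p.reverse.length := by rw [p.length_reverse]; exact hlen
    have := getVert_one_eq hH hrevlen hw1
    rwa [p.getVert_reverse] at this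
  set P : ℕ → Prop := fun n => p.getVert n ∈ T.span A with hP
  set j := Nat.findGreatest P p.length with hj
  have hjA : p.getVert j ∈ T.span A :=
    Nat.findGreatest_spec (P := P) (m := 1) hlen h1A
  have hj1 : 1 ≤ j := Nat.le_findGreatest (P := P) hlen h1A
  have hjle : j ≤ p.length := Nat.findGreatest_le _
  have hjlt : j < p.length := by
    rcases lt_or_eq_of_le hjle with h | h
    · exact h
    · rw [h, p.getVert_length] at hjA
      exact absurd (span_eq hconvχ hA hB hjA (phi_mem_span hyB)) hAB
  have hnextA : p.getVert (j+1) ∉ T.span A :=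
    Nat.findGreatest_is_greatest (P := P) (by omega) hjlt
  have hj1lt : j + 1 < p.length := by
    rcases lt_or_eq_of_le (Nat.succ_le_of_lt hjlt) with h | h
    · exact h
    · have : j = p.length - 1 := by omega
      rw [this, hlast] at hjA
      exact absurd (span_eq hconvχ hA hB hjA hw1B) hAB
  have hi1 : j - 1 + 1 = j := by omega
  have hu_int : T.IsInternal (p.getVert j) := by
    refine internal_of_two_nbrs (s := p.getVert (j-1)) (t := p.getVert (j+1))
      (hp.getVert_ne (show j - 1 < j + 1 by omega) (by omega)) ?_
      (hH (p.adj_getVert_succ hjlt))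
    have := p.adj_getVert_succ (show j - 1 < p.length by omega)
    rw [hi1] at this
    exact hH this.symm
  have hv_int : T.IsInternal (p.getVert (j+1)) := by
    refine internal_of_two_nbrs (s := p.getVert j) (t := p.getVert (j+2))
      (hp.getVert_ne (show j < j + 2 by omega) (by omega))
      (hH (p.adj_getVert_succ hjlt).symm) ?_
    have := p.adj_getVert_succ hj1lt
    exact hH this
  have hadj : T.G.Adj (p.getVert j) (p.getVert (j+1)) :=
    hH (p.adj_getVert_succ hjlt)
  obtain ⟨D, hD, hvD⟩ := hcov _ hv_int
  have hDA : D ≠ A := fun h => hnextA (h ▸ hvD)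
  have hjA2 := hjA
  obtain ⟨a, ha, a', ha', hOnu⟩ := hjA2
  have haa' : a ≠ a' := by
    rintro rfl
    obtain ⟨q, hq, hmem⟩ := hOnu
    rw [Walk.isPath_iff_eq_nil.mp hq] at hmem
    simp only [Walk.support_nil, List.mem_singleton] at hmem
    exact hu_int ⟨a, hmem.symm⟩
  obtain ⟨d, hd, d', hd', hOnv⟩ := hvD
  have hdd' : d ≠ d' := by
    rintro rfl
    obtain ⟨q, hq, hmem⟩ := hOnv
    rw [Walk.isPath_iff_eq_nil.mp hq] at hmem
    simp only [Walk.support_nil, List.mem_singleton] at hmem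
    exact hv_int ⟨d, hmem.symm⟩
  refine ⟨j, hjlt, ⟨hadj, hu_int, hv_int⟩, A, hA, D, hD, hDA.symm,
    ⟨a, ha, a', ha', haa', hOnu, fun hOn => hnextA (onPath_mem_span ha ha' hOn)⟩,
    ⟨d, hd, d', hd', hdd', hOnv, fun hOn =>
      hDA (span_eq hconvχ hD hA (onPath_mem_span hd hd' hOn) hjA)⟩⟩

end PhyloTree



/-- a set of `k ∈ {1,2,3}` characters which is convex on `T`,
distinguishes `T`, has no singleton parts, with every internal edge distinguished by
exactly one character and every character distinguishing some internal edge, arises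
from an internal `k`-colouring. -/
theorem characters_give_coloring {X : Type} (T : PhyloTree X)
    (hbin : T.IsBinary) (hX : 4 ≤ Nat.card X)
    (k : ℕ) (hk1 : 1 ≤ k) (hk3 : k ≤ 3)
    (C : Set (Set (Set X))) (hfin : C.Finite) (hcard : C.ncard = k)
    (hchar : ∀ χ ∈ C, Setoid.IsPartition χ)
    (hconv : ∀ χ ∈ C, T.ConvexOn χ)
    (hdist : T.Distinguishes C)
    (hnosing : ∀ χ ∈ C, ∀ A ∈ χ, A.ncard ≠ 1)
    (hexact : ∀ u v : T.V, T.IsInternalEdge u v →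
      ∃! χ : Set (Set X), χ ∈ C ∧ T.DistEdge χ u v)
    (heach : ∀ χ ∈ C, ∃ u v : T.V, T.IsInternalEdge u v ∧ T.DistEdge χ u v) :
    ∃ c : T.InternalColoring k, C = T.charSet c := by
  classical
  haveI := T.vfin
  haveI hfinX : Finite X := Nat.finite_of_card_ne_zero (by omega)
  haveI := hfin.fintype
  have hcC : Fintype.card ↥C = k := by
    rw [← Nat.card_eq_fintype_card, Nat.card_coe_set_eq, hcard]
  let ε : ↥C ≃ Fin k := Fintype.equivFinOfCardEq hcC
  have hk0 : 0 < k := hk1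
  let idx : T.V → T.V → Fin k := fun u v =>
    if h : T.IsInternalEdge u v then
      ε ⟨(hexact u v h).choose, (hexact u v h).choose_spec.1.1⟩
    else ⟨0, hk0⟩
  have hidx_eq : ∀ u v, T.IsInternalEdge u v → ∀ χ (hχ : χ ∈ C),
      T.DistEdge χ u v → idx u v = ε ⟨χ, hχ⟩ := by
    intro u v h χ hχ hd
    simp only [idx, dif_pos h]
    exact congrArg ε (Subtype.ext ((hexact u v h).choose_spec.2 χ ⟨hχ, hd⟩).symm)
  have hidx_dist : ∀ u v, T.IsInternalEdge u v →
      ∃ χ, ∃ hχ : χ ∈ C, T.DistEdge χ u v ∧ idx u v = ε ⟨χ, hχ⟩ := by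
    intro u v h
    exact ⟨(hexact u v h).choose, (hexact u v h).choose_spec.1.1,
      (hexact u v h).choose_spec.1.2, by simp only [idx, dif_pos h]⟩
  have hidx_symm : ∀ u v, idx u v = idx v u := by
    intro u v
    by_cases h : T.IsInternalEdge u v
    · have h' := PhyloTree.isInternalEdge_symm h
      obtain ⟨χ, hχ, hd, he⟩ := hidx_dist v u h'
      rw [he, hidx_eq u v h χ hχ (PhyloTree.distEdge_symm hd)]
    · have h' : ¬ T.IsInternalEdge v u := fun hh => h (PhyloTree.isInternalEdge_symm hh)
      simp only [idx, dif_neg h, dif_neg h']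
  let γ : Sym2 T.V → Fin k := Sym2.lift ⟨idx, hidx_symm⟩
  have hγ : ∀ u v, γ s(u, v) = idx u v := fun u v => rfl
  have hproper : ∀ u v w : T.V, T.IsInternalEdge u v → T.IsInternalEdge v w →
      u ≠ w → γ s(u,v) ≠ γ s(v,w) := by
    intro u v w huv hvw hne heq
    rw [hγ, hγ] at heq
    obtain ⟨χ1, hχ1, hd1, he1⟩ := hidx_dist u v huv
    obtain ⟨χ2, hχ2, hd2, he2⟩ := hidx_dist v w hvw
    rw [he1, he2] at heq
    have hχeq : χ1 = χ2 := Subtype.ext_iff.mp (ε.injective heq)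
    exact PhyloTree.no_adjacent_same hbin (hconv χ1 hχ1) huv hvw hne hd1
      (by rw [hχeq]; exact hd2)
  have hsurj : ∀ i : Fin k, ∃ u v : T.V, T.IsInternalEdge u v ∧ γ s(u,v) = i := by
    intro i
    obtain ⟨u, v, huv, hd⟩ := heach (ε.symm i).1 (ε.symm i).2
    refine ⟨u, v, huv, ?_⟩
    rw [hγ, hidx_eq u v huv _ (ε.symm i).2 hd]
    exact ε.apply_symm_apply i
  let c : T.InternalColoring k := ⟨γ, hproper, hsurj⟩
  have hdelset : ∀ χ (hχ : χ ∈ C) (u v : T.V),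
      (s(u,v) ∈ {e | c.γ e = ε ⟨χ,hχ⟩ ∧ ∃ a b : T.V, e = s(a,b) ∧ T.IsInternalEdge a b})
        ↔ (T.IsInternalEdge u v ∧ T.DistEdge χ u v) := by
    intro χ hχ u v
    constructor
    · rintro ⟨hγe, a, b, heq, hint⟩
      have hint' : T.IsInternalEdge u v := by
        rcases Sym2.eq_iff.mp heq with ⟨rfl, rfl⟩ | ⟨rfl, rfl⟩
        · exact hint
        · exact PhyloTree.isInternalEdge_symm hint
      refine ⟨hint', ?_⟩
      obtain ⟨χ0, hχ0, hd0, he0⟩ := hidx_dist u v hint'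
      have hge : γ s(u,v) = ε ⟨χ,hχ⟩ := hγe
      rw [hγ, he0] at hge
      have : χ0 = χ := Subtype.ext_iff.mp (ε.injective hge)
      exact this ▸ hd0
    · rintro ⟨hint, hd⟩
      exact ⟨by rw [show c.γ s(u,v) = idx u v from hγ u v,
        hidx_eq u v hint χ hχ hd], u, v, rfl, hint⟩
  have hcov : ∀ χ, χ ∈ C → ∀ v : T.V, T.IsInternal v → ∃ A ∈ χ, v ∈ T.span A :=
    fun χ hχ v hv => PhyloTree.covered hbin hfinX hfin (by omega) hchar hconv
      hdist hnosing hχ hv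
  have hreach : ∀ χ (hχ : χ ∈ C) (x y : X),
      (T.delGraph c (ε ⟨χ, hχ⟩)).Reachable (T.φ x) (T.φ y) ↔
        ∃ A ∈ χ, x ∈ A ∧ y ∈ A := by
    intro χ hχ x y
    constructor
    · rintro ⟨q⟩
      by_contra hno
      obtain ⟨A, ⟨hA, hxA⟩, -⟩ := (hchar χ hχ).2 x
      obtain ⟨B, ⟨hB, hyB⟩, -⟩ := (hchar χ hχ).2 y
      have hAB : A ≠ B := fun h => hno ⟨A, hA, hxA, h ▸ hyB⟩
      let p := q.toPath
      obtain ⟨j, hjlt, hint, hd⟩ := PhyloTree.key_edge hbin hfinX (hchar χ hχ)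
        (hconv χ hχ) (hnosing χ hχ) (hcov χ hχ) hA hB hxA hyB hAB
        (SimpleGraph.deleteEdges_le _) p.1 p.2
      have hadj := p.1.adj_getVert_succ hjlt
      have hadj' : (T.G.deleteEdges
          {e | c.γ e = ε ⟨χ,hχ⟩ ∧ ∃ a b : T.V, e = s(a,b) ∧ T.IsInternalEdge a b}).Adj
          (p.1.getVert j) (p.1.getVert (j+1)) := hadj
      rw [SimpleGraph.deleteEdges_adj] at hadj'
      exact hadj'.2 ((hdelset χ hχ _ _).mpr ⟨hint, hd⟩)
    · rintro ⟨A, hA, hxA, hyA⟩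
      obtain ⟨p, hp⟩ := PhyloTree.exists_path (T := T) (T.φ x) (T.φ y)
      have hsupp : ∀ z ∈ p.support, z ∈ T.span A :=
        fun z hz => ⟨x, hxA, y, hyA, p, hp, hz⟩
      have hedges : ∀ e ∈ p.edges, e ∉ {e | c.γ e = ε ⟨χ,hχ⟩ ∧
          ∃ a b : T.V, e = s(a,b) ∧ T.IsInternalEdge a b} := by
        intro e he hmem
        induction e with
        | _ u v =>
        have hd : T.DistEdge χ u v := ((hdelset χ hχ u v).mp hmem).2
        have hu : u ∈ p.support := p.fst_mem_support_of_mem_edges he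
        have hv : v ∈ p.support := p.snd_mem_support_of_mem_edges he
        obtain ⟨A1, hA1, B1, hB1, hne1, ⟨a, ha, a', ha', h1, hOn1, h2⟩,
          ⟨b, hb, b', hb', h3, hOn2, h4⟩⟩ := hd
        have e1 : A1 = A := PhyloTree.span_eq (hconv χ hχ) hA1 hA
          (PhyloTree.onPath_mem_span ha ha' hOn1) (hsupp u hu)
        have e2 : B1 = A := PhyloTree.span_eq (hconv χ hχ) hB1 hA
          (PhyloTree.onPath_mem_span hb hb' hOn2) (hsupp v hv)
        exact hne1 (e1.trans e2.symm)
      exact ⟨p.toDeleteEdges _ hedges⟩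
  have hcolor : ∀ χ (hχ : χ ∈ C), T.colorChar c (ε ⟨χ, hχ⟩) = χ := by
    intro χ hχ
    ext P
    simp only [PhyloTree.colorChar, Set.mem_setOf_eq]
    constructor
    · rintro ⟨x, rfl⟩
      obtain ⟨A, ⟨hA, hxA⟩, huniq⟩ := (hchar χ hχ).2 x
      have hPA : {y : X | (T.delGraph c (ε ⟨χ,hχ⟩)).Reachable (T.φ x) (T.φ y)} = A := by
        ext y
        simp only [Set.mem_setOf_eq, hreach χ hχ x y]
        constructor
        · rintro ⟨A', hA', hxA', hyA'⟩
          rwa [huniq A' ⟨hA', hxA'⟩] at hyA'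
        · intro hy
          exact ⟨A, hA, hxA, hy⟩
      rw [hPA]
      exact hA
    · intro hP
      have hne : P.Nonempty := Set.nonempty_iff_ne_empty.mpr
        (fun h => (hchar χ hχ).1 (h ▸ hP))
      obtain ⟨x, hxP⟩ := hne
      refine ⟨x, ?_⟩
      ext y
      simp only [Set.mem_setOf_eq, hreach χ hχ x y]
      constructor
      · intro hy
        exact ⟨P, hP, hxP, hy⟩
      · rintro ⟨A, hA, hxA, hyA⟩
        obtain ⟨Q, -, huniqQ⟩ := (hchar χ hχ).2 x
        rwa [huniqQ A ⟨hA, hxA⟩, ← huniqQ P ⟨hP, hxP⟩] at hyA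
  refine ⟨c, ?_⟩
  ext χ
  constructor
  · intro hχ
    exact ⟨ε ⟨χ, hχ⟩, hcolor χ hχ⟩
  · rintro ⟨i, rfl⟩
    have h := hcolor (ε.symm i).1 (ε.symm i).2
    rw [show (⟨(ε.symm i).1, (ε.symm i).2⟩ : ↥C) = ε.symm i from rfl,
      ε.apply_symm_apply] at h
    rw [h]
    exact (ε.symm i).2
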